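/- Let $B \in \mathbb{R}^{n\times n}$ be an invertible lower-triangular matrix with unit diagonal, and let $D, W \in \mathbb{R}^{n\times n}$ be diagonal matrices with strictly positive diagonal entries. Define $\tilde\Sigma = B^{-1} D B^{-T}$, $\tilde\Sigma^{-1} = B^T D^{-1} B$, and the LVA-preconditioned matrix $M = P^{-1/2}(W + \tilde\Sigma^{-1})P^{-T/2}$ with $P^{1/2} = B^T D^{-1/2}$. Then the condition number of $M$ is bounded as $\frac{\lambda_1(M)}{\lambda_n(M)} \le \frac{\lambda_1(\tilde\Sigma)\max_i(W_{ii}) + 1}{\lambda_n(\tilde\Sigma)\min_i(W_{ii}) + 1}$. -/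

import Mathlib

/-!
Put `F = P^{-1/2}`. Since `P Pᵀ = Σ̃⁻¹`, the preconditioned matrix is `M = 1 + F W Fᵀ`, and
`Fᵀ F = Σ̃`, so `F Fᵀ` has the same characteristic polynomial as `Σ̃`. In the Loewner order
`λₙ(Σ̃) ≤ F Fᵀ ≤ λ₁(Σ̃)` and `minᵢ Wᵢᵢ ≤ W ≤ maxᵢ Wᵢᵢ`; conjugating by `F` confines the spectrum
of `M` to `[λₙ(Σ̃) minᵢ Wᵢᵢ + 1, λ₁(Σ̃) maxᵢ Wᵢᵢ + 1]`, an interval of positive numbers.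
-/

open Matrix Polynomial
open scoped MatrixOrder

section StarOrderedAlgebra

variable {A : Type*} [Ring A] [StarRing A] [PartialOrder A] [StarOrderedRing A] [Algebra ℝ A]
  [PosSMulMono ℝ A]

theorem star_right_conjugate_le_smul_one {a f : A} {e b : ℝ} (he : 0 ≤ e) (ha : a ≤ e • 1)
    (hf : f * star f ≤ b • 1) : f * a * star f ≤ (e * b) • 1 :=
  calc f * a * star f ≤ f * (e • 1) * star f := star_right_conjugate_le_conjugate ha f
    _ = e • (f * star f) := by rw [mul_smul_comm, mul_one, smul_mul_assoc]
    _ ≤ e • (b • 1) := smul_le_smul_of_nonneg_left hf he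
    _ = (e * b) • 1 := smul_smul e b 1

theorem smul_one_le_star_right_conjugate {a f : A} {c l : ℝ} (hc : 0 ≤ c) (ha : c • 1 ≤ a)
    (hf : l • 1 ≤ f * star f) : (c * l) • 1 ≤ f * a * star f :=
  calc (c * l) • (1 : A) = c • (l • 1) := (smul_smul c l 1).symm
    _ ≤ c • (f * star f) := smul_le_smul_of_nonneg_left hf hc
    _ = f * (c • 1) * star f := by rw [mul_smul_comm, mul_one, smul_mul_assoc]
    _ ≤ f * a * star f := star_right_conjugate_le_conjugate ha f

end StarOrderedAlgebra

namespace Matrix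

section Diagonal

variable {n : Type*} [DecidableEq n]

theorem diagonal_le_smul_one {d : n → ℝ} {e : ℝ} (h : ∀ i, d i ≤ e) : diagonal d ≤ e • 1 := by
  rw [le_iff, smul_one_eq_diagonal, diagonal_sub, posSemidef_diagonal_iff]
  exact fun i => sub_nonneg.2 (h i)

theorem smul_one_le_diagonal {d : n → ℝ} {c : ℝ} (h : ∀ i, c ≤ d i) : c • 1 ≤ diagonal d := by
  rw [le_iff, smul_one_eq_diagonal, diagonal_sub, posSemidef_diagonal_iff]
  exact fun i => sub_nonneg.2 (h i)

end Diagonal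

variable {n : Type*} [Fintype n] [DecidableEq n]

theorem mem_spectrum_iff_of_charpoly_eq_prod {K : Type*} [Field K] {A : Matrix n n K}
    {ν : n → K} (h : A.charpoly = ∏ i, (X - C (ν i))) {x : K} :
    x ∈ spectrum K A ↔ ∃ i, ν i = x := by
  rw [mem_spectrum_iff_isRoot_charpoly, h, isRoot_prod]
  simp [sub_eq_zero, eq_comm]

theorem le_smul_one_of_charpoly_eq_prod {A : Matrix n n ℝ} (hA : A.IsHermitian) {ν : n → ℝ}
    (h : A.charpoly = ∏ i, (X - C (ν i))) {b : ℝ} (hb : ∀ i, ν i ≤ b) : A ≤ b • 1 := by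
  rw [← Algebra.algebraMap_eq_smul_one]
  refine le_algebraMap_of_spectrum_le fun x hx => ?_
  obtain ⟨i, rfl⟩ := (mem_spectrum_iff_of_charpoly_eq_prod h).1 hx
  exact hb i

theorem smul_one_le_of_charpoly_eq_prod {A : Matrix n n ℝ} (hA : A.IsHermitian) {ν : n → ℝ}
    (h : A.charpoly = ∏ i, (X - C (ν i))) {a : ℝ} (ha : ∀ i, a ≤ ν i) : a • 1 ≤ A := by
  rw [← Algebra.algebraMap_eq_smul_one]
  refine algebraMap_le_of_le_spectrum fun x hx => ?_
  obtain ⟨i, rfl⟩ := (mem_spectrum_iff_of_charpoly_eq_prod h).1 hx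
  exact ha i

theorem spectrum_one_add_mul_mul_transpose_subset_Icc {F W : Matrix n n ℝ} {ν : n → ℝ}
    (hν : (Fᵀ * F).charpoly = ∏ i, (X - C (ν i))) {a b c e : ℝ} (ha : ∀ i, a ≤ ν i)
    (hb : ∀ i, ν i ≤ b) (hc : 0 ≤ c) (he : 0 ≤ e) (hcW : c • 1 ≤ W) (hWe : W ≤ e • 1) :
    spectrum ℝ (1 + F * W * Fᵀ) ⊆ Set.Icc (a * c + 1) (b * e + 1) := by
  have hFF : (F * Fᵀ).IsHermitian := (posSemidef_self_mul_conjTranspose F).isHermitian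
  rw [charpoly_mul_comm] at hν
  have hupper : 1 + F * W * Fᵀ ≤ algebraMap ℝ _ (b * e + 1) := by
    rw [Algebra.algebraMap_eq_smul_one, add_smul, one_smul, add_comm, mul_comm]
    gcongr
    exact star_right_conjugate_le_smul_one he hWe (le_smul_one_of_charpoly_eq_prod hFF hν hb)
  have hlower : algebraMap ℝ _ (a * c + 1) ≤ 1 + F * W * Fᵀ := by
    rw [Algebra.algebraMap_eq_smul_one, add_smul, one_smul, add_comm, mul_comm]
    gcongr
    exact smul_one_le_star_right_conjugate hc hcW (smul_one_le_of_charpoly_eq_prod hFF hν ha)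
  have hM : IsSelfAdjoint (1 + F * W * Fᵀ) := .of_ge hlower (.algebraMap _ (.all _))
  exact fun x hx => ⟨(algebraMap_le_iff_le_spectrum hM).1 hlower x hx,
    (le_algebraMap_iff_spectrum_le hM).1 hupper x hx⟩

theorem inv_mul_add_mul_transpose_mul_inv_transpose {R : Type*} [CommRing R] {P : Matrix n n R}
    (hP : IsUnit P.det) (W : Matrix n n R) :
    P⁻¹ * (W + P * Pᵀ) * P⁻¹ᵀ = 1 + P⁻¹ * W * P⁻¹ᵀ := by
  rw [Matrix.mul_add, Matrix.add_mul, add_comm, ← Matrix.mul_assoc, nonsing_inv_mul P hP,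
    Matrix.one_mul, ← transpose_mul, nonsing_inv_mul P hP, transpose_one]

theorem transpose_mul_inv_mul_inv {R : Type*} [CommRing R] (B : Matrix n n R) {D : Matrix n n R}
    (hD : IsUnit D.det) : (Bᵀ * D⁻¹ * B)⁻¹ = B⁻¹ * D * B⁻¹ᵀ := by
  rw [Matrix.mul_inv_rev, Matrix.mul_inv_rev, nonsing_inv_nonsing_inv D hD, transpose_nonsing_inv,
    Matrix.mul_assoc]

theorem inv_diagonal_of_ne_zero {K : Type*} [Field K] {d : n → K} (hd : ∀ i, d i ≠ 0) :
    (diagonal d)⁻¹ = diagonal fun i => (d i)⁻¹ := by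
  refine inv_eq_right_inv ?_
  rw [diagonal_mul_diagonal, ← diagonal_one]
  exact congrArg diagonal (funext fun i => mul_inv_cancel₀ (hd i))

theorem transpose_mul_diagonal_sqrt_inv_mul_transpose (B : Matrix n n ℝ) {d : n → ℝ}
    (hd : ∀ i, 0 < d i) :
    Bᵀ * diagonal (fun i => √(d i)⁻¹) * (Bᵀ * diagonal (fun i => √(d i)⁻¹))ᵀ =
      Bᵀ * (diagonal d)⁻¹ * B := by
  rw [transpose_mul, diagonal_transpose, transpose_transpose, Matrix.mul_assoc,
    ← Matrix.mul_assoc (diagonal _), diagonal_mul_diagonal,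
    inv_diagonal_of_ne_zero fun i => (hd i).ne', ← Matrix.mul_assoc]
  congr 3
  exact funext fun i => Real.mul_self_sqrt (inv_nonneg.2 (hd i).le)

theorem isUnit_det_transpose_mul_diagonal_sqrt_inv {B : Matrix n n ℝ} (hB : IsUnit B.det)
    {d : n → ℝ} (hd : ∀ i, 0 < d i) : IsUnit (Bᵀ * diagonal (fun i => √(d i)⁻¹)).det := by
  rw [det_mul, det_transpose, det_diagonal]
  exact hB.mul (isUnit_iff_ne_zero.2 (Finset.prod_ne_zero_iff.2 fun i _ =>
    (Real.sqrt_pos.2 (inv_pos.2 (hd i))).ne'))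

theorem isUnit_det_diagonal_of_ne_zero {K : Type*} [Field K] {d : n → K} (hd : ∀ i, d i ≠ 0) :
    IsUnit (diagonal d).det := by
  rw [det_diagonal]
  exact isUnit_iff_ne_zero.2 (Finset.prod_ne_zero_iff.2 fun i _ => hd i)

end Matrix

theorem lva_condition_number_bound_general {n : ℕ}
    (B D W Sinv St Phalf M : Matrix (Fin (n + 1)) (Fin (n + 1)) ℝ)
    (d w : Fin (n + 1) → ℝ) (hd : ∀ i, 0 < d i) (hw : ∀ i, 0 < w i)
    (hBinv : IsUnit B.det)
    (hD : D = Matrix.diagonal d) (hW : W = Matrix.diagonal w)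
    (hSt : St = B⁻¹ * D * (B⁻¹)ᵀ)
    (hSinv : Sinv = Bᵀ * D⁻¹ * B)
    (hP : Phalf = Bᵀ * Matrix.diagonal (fun i => Real.sqrt ((d i)⁻¹)))
    (hM : M = Phalf⁻¹ * (W + Sinv) * (Phalf⁻¹)ᵀ)
    (μ ν : Fin (n + 1) → ℝ) (hνa : Antitone ν)
    (hμ : M.charpoly = ∏ i : Fin (n + 1), (X - C (μ i)))
    (hν : St.charpoly = ∏ i : Fin (n + 1), (X - C (ν i))) :
    μ 0 / μ (Fin.last n) ≤
      (ν 0 * (⨆ i, w i) + 1) / (ν (Fin.last n) * (⨅ i, w i) + 1) := by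
  have hPdet : IsUnit Phalf.det := hP ▸ isUnit_det_transpose_mul_diagonal_sqrt_inv hBinv hd
  have hPP : Phalf * Phalfᵀ = Sinv := by
    rw [hP, hSinv, hD, transpose_mul_diagonal_sqrt_inv_mul_transpose B hd]
  have hStF : St = Phalf⁻¹ᵀ * Phalf⁻¹ := by
    rw [hSt, hD, ← transpose_mul_inv_mul_inv B (isUnit_det_diagonal_of_ne_zero fun i => (hd i).ne'),
      ← hD, ← hSinv, ← hPP, Matrix.mul_inv_rev, transpose_nonsing_inv]
  have hMF : M = 1 + Phalf⁻¹ * W * Phalf⁻¹ᵀ := by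
    rw [hM, ← hPP, inv_mul_add_mul_transpose_mul_inv_transpose hPdet]
  have hsup : ∀ i, w i ≤ ⨆ i, w i := le_ciSup (Finite.bddAbove_range w)
  have hinf : ∀ i, (⨅ i, w i) ≤ w i := ciInf_le (Finite.bddBelow_range w)
  have hinf_pos : 0 < ⨅ i, w i := by
    obtain ⟨i, hi⟩ := exists_eq_ciInf_of_finite (f := w)
    exact hi ▸ hw i
  rw [hStF] at hν
  have hspec := spectrum_one_add_mul_mul_transpose_subset_Icc hν (fun i => hνa (Fin.le_last i))
    (fun i => hνa (Fin.zero_le i)) hinf_pos.le ((hw 0).le.trans (hsup 0))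
    (hW ▸ smul_one_le_diagonal hinf) (hW ▸ diagonal_le_smul_one hsup)
  rw [← hMF] at hspec
  have hμ0 := (hspec ((mem_spectrum_iff_of_charpoly_eq_prod hμ).2 ⟨0, rfl⟩)).2
  have hμl := (hspec ((mem_spectrum_iff_of_charpoly_eq_prod hμ).2 ⟨Fin.last n, rfl⟩)).1
  have hνl : 0 ≤ ν (Fin.last n) := spectrum_nonneg_of_nonneg
    (posSemidef_conjTranspose_mul_self Phalf⁻¹).nonneg
    ((mem_spectrum_iff_of_charpoly_eq_prod hν).2 ⟨Fin.last n, rfl⟩)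
  have hden : 0 < ν (Fin.last n) * (⨅ i, w i) + 1 := by positivity
  have hnum : 0 ≤ ν 0 * (⨆ i, w i) + 1 :=
    add_nonneg (mul_nonneg (hνl.trans (hνa (Fin.zero_le _))) ((hw 0).le.trans (hsup 0)))
      zero_le_one
  exact div_le_div₀ hnum hμ0 hden hμl

/-- Condition number bound for the LVA-preconditioned matrix
`M = P^{-1/2}(W + Σ̃⁻¹)P^{-T/2}` with `P½ = Bᵀ D^{-1/2}`:
`λ₁(M)/λₙ(M) ≤ (λ₁(Σ̃) maxᵢ Wᵢᵢ + 1) / (λₙ(Σ̃) minᵢ Wᵢᵢ + 1)`.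
`μ` and `ν` are the decreasingly ordered eigenvalue sequences of `M` and `Σ̃`,
so `λ₁ = μ 0` and `λₙ = μ (Fin.last n)`. -/
theorem lva_condition_number_bound {n : ℕ}
    (B D W Sinv St Phalf M : Matrix (Fin (n + 1)) (Fin (n + 1)) ℝ)
    (d w : Fin (n + 1) → ℝ) (hd : ∀ i, 0 < d i) (hw : ∀ i, 0 < w i)
    (hBlow : ∀ i j : Fin (n + 1), i < j → B i j = 0) (hBdiag : ∀ i, B i i = 1)
    (hBinv : IsUnit B.det)
    (hD : D = Matrix.diagonal d) (hW : W = Matrix.diagonal w)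
    (hSt : St = B⁻¹ * D * (B⁻¹)ᵀ)
    (hSinv : Sinv = Bᵀ * D⁻¹ * B)
    (hP : Phalf = Bᵀ * Matrix.diagonal (fun i => Real.sqrt ((d i)⁻¹)))
    (hM : M = Phalf⁻¹ * (W + Sinv) * (Phalf⁻¹)ᵀ)
    (μ ν : Fin (n + 1) → ℝ) (hμa : Antitone μ) (hνa : Antitone ν)
    (hμ : M.charpoly = ∏ i : Fin (n + 1), (X - C (μ i)))
    (hν : St.charpoly = ∏ i : Fin (n + 1), (X - C (ν i))) :
    μ 0 / μ (Fin.last n) ≤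
      (ν 0 * (⨆ i, w i) + 1) / (ν (Fin.last n) * (⨅ i, w i) + 1) :=
  lva_condition_number_bound_general B D W Sinv St Phalf M d w hd hw hBinv hD hW hSt hSinv hP hM μ ν
    hνa hμ hν
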